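/- arXiv:1804.06588 — 2 statements merged into one kernel-verified Lean document; each statement's English description precedes it below -/
import Mathlib

section
/- Let M be a 3-connected matroid and let (X, {e}, Y) be a partition of the ground set such that X is exactly 3-separating (λ_M(X) = 2). Then X ∪ {e} is 3-separating if and only if e ∈ cl(X) or e ∈ cl*(X); and X ∪ {e} is exactly 3-separating if and only if either e ∈ cl(X) ∩ cl(Y) or e ∈ cl*(X) ∩ cl*(Y). -/
open Set Matroid

namespace NDP

variable {α : Type*}

/-- The rank of a set in a matroid: the supremum of sizes of independent subsets. -/
noncomputable def rk (M : Matroid α) (X : Set α) : ℕ :=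
  sSup {n | ∃ I, M.Indep I ∧ I ⊆ X ∧ I.ncard = n}

/-- A circuit: a minimal dependent subset of the ground set. -/
def Circuit (M : Matroid α) (C : Set α) : Prop :=
  C ⊆ M.E ∧ ¬ M.Indep C ∧ ∀ x ∈ C, M.Indep (C \ {x})

/-- A cocircuit: a circuit of the dual matroid. -/
def Cocircuit (M : Matroid α) (C : Set α) : Prop := Circuit M✶ C

/-- Deletion of a set of elements. -/
def delete (M : Matroid α) (D : Set α) : Matroid α := M ↾ (M.E \ D)

/-- Contraction of a set of elements. -/
def contract (M : Matroid α) (C : Set α) : Matroid α := (delete M✶ C)✶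

/-- The connectivity function `λ_M(X) = r(X) + r(E − X) − r(M)`. -/
noncomputable def lambda (M : Matroid α) (X : Set α) : ℤ :=
  (rk M X : ℤ) + (rk M (M.E \ X) : ℤ) - (rk M M.E : ℤ)

/-- `S` gives a `k`-separation `(S, E − S)` of `M`. -/
def IsKSeparation (M : Matroid α) (k : ℕ) (S : Set α) : Prop :=
  S ⊆ M.E ∧ lambda M S ≤ (k : ℤ) - 1 ∧ k ≤ S.ncard ∧ k ≤ (M.E \ S).ncard

/-- A matroid is connected (2-connected) if it has no 1-separation. -/
def Connected (M : Matroid α) : Prop := ∀ S, ¬ IsKSeparation M 1 S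

/-- A matroid is 3-connected if it has no `k`-separation for `k < 3`. -/
def ThreeConnected (M : Matroid α) : Prop := ∀ k < 3, ∀ S, ¬ IsKSeparation M k S

/-- Isomorphism of two matroids on the same type. -/
def Iso (M N : Matroid α) : Prop :=
  ∃ e : M.E ≃ N.E,
    ∀ I : Set M.E, M.Indep (Subtype.val '' I) ↔ N.Indep (Subtype.val '' (e '' I))

/-- `N` is a minor of `M`. -/
def IsMinor (N M : Matroid α) : Prop :=
  ∃ C D : Set α, C ⊆ M.E ∧ D ⊆ M.E ∧ Disjoint C D ∧ N = delete (contract M C) D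

/-- `M` has a minor isomorphic to `N`. -/
def HasMinorIso (M N : Matroid α) : Prop := ∃ M', IsMinor M' M ∧ Iso M' N

/-- `N` is a simplification of `M`: the restriction of `M` to a set of representatives,
one from each parallel class of nonloop elements. -/
def IsSimplification (M N : Matroid α) : Prop :=
  ∃ X ⊆ M.E, N = M ↾ X ∧
    (∀ e ∈ X, M.Indep {e}) ∧
    (∀ e f, e ∈ X → f ∈ X → e ∈ M.closure {f} → e = f) ∧
    (∀ e ∈ M.E, M.Indep {e} → ∃ f ∈ X, e ∈ M.closure {f})

/-- `si M` is 3-connected. -/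
def SiThreeConnected (M : Matroid α) : Prop :=
  ∀ N, IsSimplification M N → ThreeConnected N

/-- `co M` is 3-connected; the cosimplification is the dual of the simplification of the dual. -/
def CoThreeConnected (M : Matroid α) : Prop :=
  ∀ N, IsSimplification M✶ N → ThreeConnected N✶

end NDP


namespace NDP

section Aux

variable {α : Type*} {M : Matroid α} {X Y I S : Set α} {e : α}

lemma rk_bddAbove (M : Matroid α) [M.Finite] (X : Set α) :
    BddAbove {n | ∃ I, M.Indep I ∧ I ⊆ X ∧ I.ncard = n} := by
  refine ⟨M.E.ncard, ?_⟩
  rintro n ⟨I, hI, -, rfl⟩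
  exact Set.ncard_le_ncard hI.subset_ground M.ground_finite

lemma ncard_le_rk [M.Finite] (hI : M.Indep I) (hIX : I ⊆ X) : I.ncard ≤ rk M X :=
  le_csSup (rk_bddAbove M X) ⟨I, hI, hIX, rfl⟩

lemma rk_eq_ncard_of_basis' [M.Finite] (hI : M.IsBasis' I X) : rk M X = I.ncard := by
  have hIfin : I.Finite := M.set_finite I hI.indep.subset_ground
  refine le_antisymm ?_ (ncard_le_rk hI.indep hI.subset)
  refine csSup_le ⟨0, ∅, M.empty_indep, empty_subset _, by simp⟩ ?_
  rintro n ⟨J, hJ, hJX, rfl⟩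
  obtain ⟨J', hJ', hJJ'⟩ := hJ.subset_isBasis'_of_subset hJX
  have hcard := hJ'.encard_eq_encard hI
  have hle : J.encard ≤ I.encard := hcard ▸ Set.encard_mono hJJ'
  rw [Set.ncard_def, Set.ncard_def]
  exact ENat.toNat_le_toNat hle hIfin.encard_lt_top.ne

lemma rk_union_singleton_of_mem_closure [M.Finite] (h : e ∈ M.closure X) :
    rk M (X ∪ {e}) = rk M X := by
  obtain ⟨I, hI⟩ := M.exists_isBasis' X
  have hcl : M.closure I = M.closure X := hI.closure_eq_closure
  have hb : M.IsBasis' I (X ∪ {e}) := by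
    rw [isBasis'_iff_isBasis_inter_ground]
    refine hI.indep.isBasis_of_subset_of_subset_closure ?_ ?_
    · exact hI.isBasis_inter_ground.subset.trans
        (inter_subset_inter_left _ subset_union_left)
    · rw [hcl]
      rintro x ⟨hx | hx, hxE⟩
      · exact M.inter_ground_subset_closure X ⟨hx, hxE⟩
      · rwa [hx]
  rw [rk_eq_ncard_of_basis' hb, rk_eq_ncard_of_basis' hI]

lemma rk_union_singleton_of_not_mem_closure [M.Finite] (he : e ∈ M.E)
    (h : e ∉ M.closure X) : rk M (X ∪ {e}) = rk M X + 1 := by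
  obtain ⟨I, hI⟩ := M.exists_isBasis' X
  have hcl : M.closure I = M.closure X := hI.closure_eq_closure
  have heI : e ∉ I := fun heI ↦ h (hcl ▸ M.subset_closure I hI.indep.subset_ground heI)
  have hind : M.Indep (insert e I) := by
    rw [hI.indep.insert_indep_iff_of_notMem heI]
    exact ⟨he, hcl ▸ h⟩
  have hb : M.IsBasis' (insert e I) (X ∪ {e}) := by
    rw [isBasis'_iff_isBasis_inter_ground]
    refine hind.isBasis_of_subset_of_subset_closure ?_ ?_
    · rintro x (rfl | hx)
      · exact ⟨Or.inr rfl, he⟩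
      · exact ⟨Or.inl (hI.subset hx), hI.indep.subset_ground hx⟩
    · rintro x ⟨hx | hx, hxE⟩
      · exact (M.closure_subset_closure (subset_insert e I))
          (hcl ▸ M.inter_ground_subset_closure X ⟨hx, hxE⟩)
      · rw [hx]
        exact M.mem_closure_of_mem' (mem_insert e I) he
  rw [rk_eq_ncard_of_basis' hb, rk_eq_ncard_of_basis' hI,
    Set.ncard_insert_of_notMem heI (M.set_finite I hI.indep.subset_ground)]

lemma mem_closure_iff_rk [M.Finite] (he : e ∈ M.E) :
    e ∈ M.closure X ↔ rk M (X ∪ {e}) = rk M X := by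
  refine ⟨rk_union_singleton_of_mem_closure, fun h ↦ by_contra fun hc ↦ ?_⟩
  rw [rk_union_singleton_of_not_mem_closure he hc] at h
  omega

lemma rk_dual_add [M.Finite] (hS : S ⊆ M.E) :
    rk M✶ S + rk M M.E = S.ncard + rk M (M.E \ S) := by
  have hSfin : S.Finite := M.set_finite S hS
  obtain ⟨J, hJ⟩ := M.exists_isBasis (M.E \ S) diff_subset
  have hJfin : J.Finite := M.set_finite J hJ.indep.subset_ground
  obtain ⟨B, hB, hJB⟩ := hJ.indep.exists_isBase_superset
  have hBfin : B.Finite := M.set_finite B hB.subset_ground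
  have hrE : rk M M.E = B.ncard := rk_eq_ncard_of_basis' hB.isBasis_ground.isBasis'
  have hrJ : rk M (M.E \ S) = J.ncard := rk_eq_ncard_of_basis' hJ.isBasis'
  have hBJ : B ∩ (M.E \ S) = J := by
    refine (hJ.eq_of_subset_indep (hB.indep.inter_right _)
      (subset_inter hJB hJ.subset) inter_subset_right).symm
  -- card identities
  have hBsplit : (B ∩ (M.E \ S)).ncard + (B \ (M.E \ S)).ncard = B.ncard :=
    Set.ncard_inter_add_ncard_diff_eq_ncard B (M.E \ S) hBfin
  have hBdS : B \ (M.E \ S) = B ∩ S := by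
    ext x
    simp only [mem_diff, mem_inter_iff, not_and, not_not]
    exact ⟨fun ⟨hxB, hx⟩ ↦ ⟨hxB, hx (hB.subset_ground hxB)⟩,
      fun ⟨hxB, hxS⟩ ↦ ⟨hxB, fun _ ↦ hxS⟩⟩
  have hSsplit : (S ∩ B).ncard + (S \ B).ncard = S.ncard :=
    Set.ncard_inter_add_ncard_diff_eq_ncard S B hSfin
  have hSBint : (S ∩ B).ncard = (B ∩ S).ncard := by rw [inter_comm]
  rw [hBJ, hBdS] at hBsplit
  refine le_antisymm ?_ ?_
  · -- rk* S + rE ≤ |S| + r(E\S)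
    have h1 : rk M✶ S ≤ S.ncard + rk M (M.E \ S) - rk M M.E := by
      refine csSup_le ⟨0, ∅, M✶.empty_indep, empty_subset _, by simp⟩ ?_
      rintro n ⟨I, hI, hIS, rfl⟩
      have hIfin : I.Finite := hSfin.subset hIS
      obtain ⟨B', hB', hdisj⟩ := (dual_indep_iff_exists (M := M) hI.subset_ground).mp hI
      have hB'fin : B'.Finite := M.set_finite B' hB'.subset_ground
      have hrE' : rk M M.E = B'.ncard := rk_eq_ncard_of_basis' hB'.isBasis_ground.isBasis'
      have hsplit : (B' ∩ S).ncard + (B' \ S).ncard = B'.ncard :=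
        Set.ncard_inter_add_ncard_diff_eq_ncard B' S hB'fin
      have h2 : (B' ∩ S).ncard ≤ (S \ I).ncard := by
        refine Set.ncard_le_ncard ?_ (hSfin.diff (t := I))
        rintro x ⟨hxB, hxS⟩
        exact ⟨hxS, fun hxI ↦ (Set.disjoint_left.mp hdisj hxI) hxB⟩
      have h3 : (B' \ S).ncard ≤ rk M (M.E \ S) :=
        ncard_le_rk (hB'.indep.diff S)
          (fun x hx ↦ ⟨hB'.subset_ground hx.1, hx.2⟩)
      have h4 : (S \ I).ncard + I.ncard = S.ncard :=
        Set.ncard_diff_add_ncard_of_subset hIS hSfin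
      omega
    have h5 : rk M M.E ≤ S.ncard + rk M (M.E \ S) := by
      have : (B ∩ S).ncard ≤ S.ncard := Set.ncard_le_ncard inter_subset_right hSfin
      omega
    omega
  · -- |S| + r(E\S) ≤ rk* S + rE : witness S \ B
    have hSB : M✶.Indep (S \ B) := by
      rw [dual_indep_iff_exists (M := M) (fun x hx ↦ hS hx.1)]
      exact ⟨B, hB, disjoint_sdiff_left⟩
    have h6 : (S \ B).ncard ≤ rk M✶ S := ncard_le_rk hSB diff_subset
    omega

lemma mem_dual_closure_iff [M.Finite] (hS : X ⊆ M.E) (he : e ∈ M.E) (heX : e ∉ X) :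
    e ∈ M✶.closure X ↔ e ∉ M.closure (M.E \ (X ∪ {e})) := by
  have hXfin : X.Finite := M.set_finite X hS
  have heE : e ∈ M✶.E := he
  have h1 : e ∈ M✶.closure X ↔ rk M✶ (X ∪ {e}) = rk M✶ X := mem_closure_iff_rk heE
  have hXe : X ∪ {e} ⊆ M.E := union_subset hS (by simpa using he)
  have hd1 := rk_dual_add (M := M) hXe
  have hd2 := rk_dual_add (M := M) hS
  have hcard : (X ∪ {e}).ncard = X.ncard + 1 := by
    rw [union_singleton, Set.ncard_insert_of_notMem heX hXfin]
  have hEX : M.E \ X = (M.E \ (X ∪ {e})) ∪ {e} := by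
    ext x
    simp only [mem_diff, mem_union, mem_singleton_iff, not_or]
    constructor
    · rintro ⟨hxE, hxX⟩
      by_cases hxe : x = e
      · exact Or.inr hxe
      · exact Or.inl ⟨hxE, hxX, hxe⟩
    · rintro (⟨hxE, hxX, -⟩ | rfl)
      · exact ⟨hxE, hxX⟩
      · exact ⟨he, heX⟩
  rw [hEX] at hd2
  by_cases hc : e ∈ M.closure (M.E \ (X ∪ {e}))
  · have := rk_union_singleton_of_mem_closure hc
    rw [this] at hd2
    simp only [hc, not_true_eq_false, iff_false, h1]
    omega
  · have := rk_union_singleton_of_not_mem_closure he hc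
    rw [this] at hd2
    simp only [hc, not_false_eq_true, iff_true, h1]
    omega

end Aux

end NDP

/-- For a partition `(X, {e}, Y)` with `X` exactly 3-separating:
`X ∪ {e}` is 3-separating iff `e ∈ cl(X)` or `e ∈ cl*(X)`, and
`X ∪ {e}` is exactly 3-separating iff `e ∈ cl(X) ∩ cl(Y)` or `e ∈ cl*(X) ∩ cl*(Y)`. -/
theorem statement_5 {α : Type*} (M : Matroid α) [M.Finite] (hM : NDP.ThreeConnected M)
    (X Y : Set α) (e : α) (hXY : Disjoint X Y) (heX : e ∉ X) (heY : e ∉ Y)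
    (hE : X ∪ {e} ∪ Y = M.E) (hX : NDP.lambda M X = 2) :
    (NDP.lambda M (X ∪ {e}) ≤ 2 ↔ (e ∈ M.closure X ∨ e ∈ M✶.closure X)) ∧
    (NDP.lambda M (X ∪ {e}) = 2 ↔
      (e ∈ M.closure X ∩ M.closure Y ∨ e ∈ M✶.closure X ∩ M✶.closure Y)) := by
  clear hM
  have hXYm : ∀ x ∈ X, x ∉ Y := fun x hx ↦ Set.disjoint_left.mp hXY hx
  have he : e ∈ M.E := by rw [← hE]; exact Or.inl (Or.inr rfl)
  have hXE : X ⊆ M.E := by rw [← hE]; exact fun x hx ↦ Or.inl (Or.inl hx)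
  have hYE : Y ⊆ M.E := by rw [← hE]; exact fun x hx ↦ Or.inr hx
  have hd1 : M.E \ X = Y ∪ {e} := by
    rw [← hE]; ext x
    simp only [mem_diff, mem_union, mem_singleton_iff]
    constructor
    · tauto
    · rintro (hx | rfl)
      · exact ⟨Or.inr hx, fun h ↦ hXYm x h hx⟩
      · exact ⟨Or.inl (Or.inr rfl), heX⟩
  have hd2 : M.E \ (X ∪ {e}) = Y := by
    rw [← hE]; ext x
    simp only [mem_diff, mem_union, mem_singleton_iff]
    constructor
    · tauto
    · intro hx
      refine ⟨Or.inr hx, ?_⟩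
      rintro (h | rfl)
      exacts [hXYm x h hx, heY hx]
  have hd3 : M.E \ (Y ∪ {e}) = X := by
    rw [← hE]; ext x
    simp only [mem_diff, mem_union, mem_singleton_iff]
    constructor
    · tauto
    · intro hx
      exact ⟨Or.inl (Or.inl hx), by rintro (h | rfl); exacts [hXYm x hx h, heX hx]⟩
  have hdx : e ∈ M✶.closure X ↔ e ∉ M.closure Y := by
    rw [NDP.mem_dual_closure_iff hXE he heX, hd2]
  have hdy : e ∈ M✶.closure Y ↔ e ∉ M.closure X := by
    rw [NDP.mem_dual_closure_iff hYE he heY, hd3]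
  simp only [NDP.lambda, hd1, hd2] at hX ⊢
  by_cases hcx : e ∈ M.closure X <;> by_cases hcy : e ∈ M.closure Y
  · rw [NDP.rk_union_singleton_of_mem_closure hcy] at hX
    rw [NDP.rk_union_singleton_of_mem_closure hcx]
    simp only [mem_inter_iff, hdx, hdy, hcx, hcy]
    constructor <;> constructor <;> intros <;> try omega
    all_goals tauto
  · rw [NDP.rk_union_singleton_of_not_mem_closure he hcy] at hX
    rw [NDP.rk_union_singleton_of_mem_closure hcx]
    simp only [mem_inter_iff, hdx, hdy, hcx, hcy]
    constructor <;> constructor <;> intros <;> try omega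
    all_goals tauto
  · rw [NDP.rk_union_singleton_of_mem_closure hcy] at hX
    rw [NDP.rk_union_singleton_of_not_mem_closure he hcx]
    simp only [mem_inter_iff, hdx, hdy, hcx, hcy]
    constructor <;> constructor <;> intros <;> try omega
    all_goals tauto
  · rw [NDP.rk_union_singleton_of_not_mem_closure he hcy] at hX
    rw [NDP.rk_union_singleton_of_not_mem_closure he hcx]
    simp only [mem_inter_iff, hdx, hdy, hcx, hcy]
    constructor <;> constructor <;> intros <;> try omega
    all_goals tauto
end

section
/- Let M be a 3-connected matroid containing a segment (a subset L of E(M) with r(L) = 2) with |L| ≥ 4. Then for every ℓ ∈ L, the matroid M\ℓ is 3-connected. -/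
/-! Let `(S, T)` be a `k`-separation of `M \ ℓ` with `k ≤ 2`. As `|L - ℓ| ≥ 3`, one side, say `S`,
contains two points `x, y` of `L - ℓ`. A 3-connected matroid on at least four elements is simple,
so `{x, y}` spans the line `L` and `ℓ ∈ cl(S)`. Adding `ℓ` to `S` then changes neither `r(S)` nor
`r(M)`, so `(S ∪ ℓ, T)` is a `k`-separation of `M`. -/

open Set Matroid

namespace NDP

variable {α : Type*}

section Connectivity

variable {M : Matroid α} {S X Y L : Set α} {e x y : α} {k : ℕ}

lemma cast_rk (M : Matroid α) [M.RankFinite] (X : Set α) : (rk M X : ℕ∞) = M.eRk X := by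
  obtain ⟨I, hI⟩ := M.exists_isBasis' X
  have hmax : IsGreatest {n | ∃ J, M.Indep J ∧ J ⊆ X ∧ J.ncard = n} I.ncard := by
    refine ⟨⟨I, hI.indep, hI.subset, rfl⟩, ?_⟩
    rintro n ⟨J, hJ, hJX, rfl⟩
    have hle : J.encard ≤ I.encard := hI.encard_eq_eRk ▸ hJ.encard_le_eRk_of_subset hJX
    rw [← hJ.finite.cast_ncard_eq, ← hI.indep.finite.cast_ncard_eq] at hle
    exact_mod_cast hle
  rw [rk, hmax.csSup_eq, hI.indep.finite.cast_ncard_eq, hI.encard_eq_eRk]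

lemma rk_mono [M.RankFinite] (h : X ⊆ Y) : rk M X ≤ rk M Y := by
  exact_mod_cast (cast_rk M X).trans_le ((M.eRk_mono h).trans_eq (cast_rk M Y).symm)

lemma rk_insert_of_mem_closure [M.RankFinite] (he : e ∈ M.closure X) :
    rk M (insert e X) = rk M X := by
  have h : M.eRk (insert e X) = M.eRk X := by
    rw [← eRk_insert_closure_eq, insert_eq_of_mem he, eRk_closure_eq]
  exact_mod_cast (cast_rk M _).trans (h.trans (cast_rk M X).symm)

lemma rk_restrict {R : Set α} (hXR : X ⊆ R) : rk (M ↾ R) X = rk M X := by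
  simp only [rk, restrict_indep_iff, and_assoc]
  congr! 5 with n I
  exact and_congr_right fun _ ↦ and_iff_right_of_imp fun h ↦ h.1.trans hXR

lemma IsKSeparation.compl (h : IsKSeparation M k S) : IsKSeparation M k (M.E \ S) := by
  obtain ⟨hSE, hlam, hS, hT⟩ := h
  refine ⟨sdiff_subset, ?_, hT, by rwa [sdiff_sdiff_cancel_left hSE]⟩
  rwa [lambda, sdiff_sdiff_cancel_left hSE, add_comm, ← lambda]

lemma lambda_insert_eq_lambda_delete [M.RankFinite] (hS : S ⊆ M.E \ {e})
    (he : e ∈ M.closure S) : lambda M (insert e S) = lambda (delete M {e}) S := by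
  have hground : rk M M.E = rk M (M.E \ {e}) := by
    have heE : e ∈ M.E := M.closure_subset_ground S he
    rw [← rk_insert_of_mem_closure (M.closure_subset_closure hS he), insert_sdiff_singleton,
      insert_eq_of_mem heE]
  have hcompl : M.E \ insert e S = (M.E \ {e}) \ S := by
    rw [sdiff_sdiff, singleton_union]
  simp only [lambda, delete, restrict_ground_eq, rk_restrict hS, rk_restrict sdiff_subset,
    rk_restrict Subset.rfl, rk_insert_of_mem_closure he, hcompl, hground]

lemma IsKSeparation.insert_of_delete [M.Finite] (h : IsKSeparation (delete M {e}) k S)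
    (he : e ∈ M.closure S) : IsKSeparation M k (insert e S) := by
  obtain ⟨hSE, hlam, hS, hT⟩ := h
  have hSE' : S ⊆ M.E \ {e} := hSE
  have heS : insert e S ⊆ M.E :=
    insert_subset (M.closure_subset_ground S he) (hSE'.trans sdiff_subset)
  refine ⟨heS, (lambda_insert_eq_lambda_delete hSE' he).trans_le hlam,
    hS.trans (ncard_le_ncard (subset_insert e S) (M.ground_finite.subset heS)), ?_⟩
  rwa [← singleton_union, ← sdiff_sdiff]

lemma ThreeConnected.indep_pair [M.Finite] (hM : ThreeConnected M) (hE : 4 ≤ M.E.ncard)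
    (hx : x ∈ M.E) (hy : y ∈ M.E) (hxy : x ≠ y) : M.Indep {x, y} := by
  by_contra hdep
  have hxyE : {x, y} ⊆ M.E := pair_subset hx hy
  have hrk : rk M {x, y} ≤ 1 := by
    have hlt := ((not_indep_iff hxyE).1 hdep).eRk_lt_encard
    rw [← cast_rk, encard_pair hxy] at hlt
    exact Order.lt_add_one_iff.1 (by exact_mod_cast hlt)
  have hcompl : rk M (M.E \ {x, y}) ≤ rk M M.E := rk_mono sdiff_subset
  refine hM 2 (by norm_num) {x, y} ⟨hxyE, ?_, (ncard_pair hxy).ge, ?_⟩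
  · simp only [lambda]
    omega
  · rw [ncard_sdiff hxyE, ncard_pair hxy]
    omega

lemma ThreeConnected.subset_closure_pair [M.Finite] (hM : ThreeConnected M)
    (hE : 4 ≤ M.E.ncard) (hLE : L ⊆ M.E) (hr : rk M L = 2) (hx : x ∈ L) (hy : y ∈ L)
    (hxy : x ≠ y) : L ⊆ M.closure {x, y} := by
  have hpair := hM.indep_pair hE (hLE hx) (hLE hy) hxy
  have hrk : M.eRk L ≤ M.eRk {x, y} := by
    rw [← cast_rk, hr, hpair.eRk_eq_encard, encard_pair hxy]
    rfl
  rw [(M.isRkFinite_set {x, y}).closure_eq_closure_of_subset_of_eRk_ge_eRk (pair_subset hx hy)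
    hrk]
  exact M.subset_closure L hLE

end Connectivity

end NDP

lemma Set.exists_ne_mem_iff_mem_of_two_lt_ncard {α : Type*} {A : Set α} (hA : 2 < A.ncard)
    (S : Set α) : ∃ x ∈ A, ∃ y ∈ A, x ≠ y ∧ (x ∈ S ↔ y ∈ S) := by
  obtain ⟨a, b, c, ha, hb, hc, hab, hac, hbc⟩ :=
    (two_lt_ncard_iff (finite_of_ncard_pos (by omega))).1 hA
  by_cases hab' : a ∈ S ↔ b ∈ S
  · exact ⟨a, ha, b, hb, hab, hab'⟩
  by_cases hac' : a ∈ S ↔ c ∈ S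
  · exact ⟨a, ha, c, hc, hac, hac'⟩
  exact ⟨b, hb, c, hc, hbc, by tauto⟩

/-- Deleting any element of a segment of size at least 4 in a
3-connected matroid keeps the matroid 3-connected. -/
theorem statement_12 {α : Type*} (M : Matroid α) [M.Finite] (hM : NDP.ThreeConnected M)
    (L : Set α) (hLE : L ⊆ M.E) (hr : NDP.rk M L = 2) (hL4 : 4 ≤ L.ncard) :
    ∀ l ∈ L, NDP.ThreeConnected (NDP.delete M {l}) := by
  intro l hl k hk S hS
  have hE4 : 4 ≤ M.E.ncard := hL4.trans (ncard_le_ncard hLE M.ground_finite)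
  have hL3 : 2 < (L \ {l}).ncard := by
    rw [ncard_sdiff_singleton_of_mem hl]
    omega
  obtain ⟨x, hx, y, hy, hxy, hxyS⟩ := Set.exists_ne_mem_iff_mem_of_two_lt_ncard hL3 S
  have hspan : l ∈ M.closure {x, y} := hM.subset_closure_pair hE4 hLE hr hx.1 hy.1 hxy hl
  have absorb (T : Set α) (hT : NDP.IsKSeparation (NDP.delete M {l}) k T) (hxT : x ∈ T)
      (hyT : y ∈ T) : False :=
    hM k hk _ (hT.insert_of_delete (M.closure_subset_closure (pair_subset hxT hyT) hspan))
  by_cases hxS : x ∈ S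
  · exact absorb S hS hxS (hxyS.1 hxS)
  · exact absorb _ hS.compl ⟨⟨hLE hx.1, hx.2⟩, hxS⟩ ⟨⟨hLE hy.1, hy.2⟩, mt hxyS.2 hxS⟩
end
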